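/- arXiv:1207.3493 — 5 statements merged into one kernel-verified Lean document; each statement's English description precedes it below -/
import Mathlib

section
/- The map sending a Farey pair (p/q, p₁/q₁) with 0 ≤ p/q <ₙ p₁/q₁ to the matrix [[q, q₁],[p, p₁]] is a bijection between the set of Farey pairs of nonnegative rationals (including the pair (0/1, 1/0)) and the monoid SL₂⁺(ℤ) of 2×2 integer matrices with nonnegative entries and determinant 1. -/
/-- A Farey pair `0 ≤ p/q <ₙ p₁/q₁`: fractions of nonnegative integers
(allowing `0/1` and `1/0`) with `p₁q - pq₁ = 1` (which forces coprimality). -/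
structure FareyPair where
  q : ℕ
  p : ℕ
  q₁ : ℕ
  p₁ : ℕ
  rel : p₁ * q = p * q₁ + 1

/-- The matrix `[[q, q₁],[p, p₁]]` associated to a Farey pair. -/
def fareyMatrix (F : FareyPair) : Matrix (Fin 2) (Fin 2) ℤ :=
  !![(F.q : ℤ), (F.q₁ : ℤ); (F.p : ℤ), (F.p₁ : ℤ)]

/-- The map `(p/q, p₁/q₁) ↦ [[q, q₁],[p, p₁]]` is a bijection from Farey pairs onto
`SL₂⁺(ℤ)`, the set of `2×2` integer matrices with nonnegative entries and determinant 1. -/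
theorem fareyMatrix_bijective :
    Function.Injective fareyMatrix ∧
    Set.range fareyMatrix =
      {A : Matrix (Fin 2) (Fin 2) ℤ | A.det = 1 ∧ ∀ i j, 0 ≤ A i j} := by
  constructor
  · rintro ⟨q, p, q₁, p₁, h⟩ ⟨q', p', q₁', p₁', h'⟩ hm
    simp only [fareyMatrix, Matrix.ext_iff.symm] at hm
    have h00 := hm 0 0
    have h01 := hm 0 1
    have h10 := hm 1 0
    have h11 := hm 1 1
    simp [Matrix.cons_val_zero, Matrix.cons_val_one] at h00 h01 h10 h11
    simp_all
  · ext A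
    constructor
    · rintro ⟨F, rfl⟩
      constructor
      · simp [fareyMatrix, Matrix.det_fin_two_of]
        nlinarith [F.rel]
      · intro i j
        fin_cases i <;> fin_cases j <;> simp [fareyMatrix]
    · rintro ⟨hdet, hpos⟩
      rw [Matrix.det_fin_two] at hdet
      have h00 := hpos 0 0
      have h01 := hpos 0 1
      have h10 := hpos 1 0
      have h11 := hpos 1 1
      refine ⟨⟨(A 0 0).toNat, (A 1 0).toNat, (A 0 1).toNat, (A 1 1).toNat, ?_⟩, ?_⟩
      · have : ((A 1 1).toNat * (A 0 0).toNat : ℤ) = (A 1 0).toNat * (A 0 1).toNat + 1 := by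
          rw [Int.toNat_of_nonneg h00, Int.toNat_of_nonneg h01, Int.toNat_of_nonneg h10,
            Int.toNat_of_nonneg h11]
          linarith
        exact_mod_cast this
      · ext i j
        fin_cases i <;> fin_cases j <;>
          simp [fareyMatrix, Int.toNat_of_nonneg, h00, h01, h10, h11]
end

section
/- Every matrix A ≠ I in SL₂⁺(ℤ) can be written as a product L^{n₁} R^{m₁} ⋯ L^{n_k} R^{m_k} with nonnegative integer exponents; in particular, the monoid SL₂⁺(ℤ) is generated by L = [[1,1],[0,1]] and R = [[1,0],[1,1]]. -/
/-- `L = [[1,1],[0,1]]`. -/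
def Lmat : Matrix (Fin 2) (Fin 2) ℤ := !![1, 1; 0, 1]

/-- `R = [[1,0],[1,1]]`. -/
def Rmat : Matrix (Fin 2) (Fin 2) ℤ := !![1, 0; 1, 1]

lemma Lmat_mul (x y z w : ℤ) : Lmat * !![x, y; z, w] = !![x + z, y + w; z, w] := by
  simp [Lmat, Matrix.mul_fin_two]

lemma Rmat_mul (x y z w : ℤ) : Rmat * !![x, y; z, w] = !![x, y; x + z, y + w] := by
  simp [Rmat, Matrix.mul_fin_two]

lemma key (n : ℕ) : ∀ (A : Matrix (Fin 2) (Fin 2) ℤ),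
    (A 0 0 + A 0 1 + A 1 0 + A 1 1).toNat ≤ n → A.det = 1 → (∀ i j, 0 ≤ A i j) → A ≠ 1 →
    ∃ l : List (ℕ × ℕ), l ≠ [] ∧
      A = (l.map (fun nm => Lmat ^ nm.1 * Rmat ^ nm.2)).prod := by
  induction n with
  | zero =>
    intro A hs hdet hpos _
    exfalso
    have h00 := hpos 0 0; have h01 := hpos 0 1
    have h10 := hpos 1 0; have h11 := hpos 1 1
    have hz : A 0 0 = 0 ∧ A 0 1 = 0 ∧ A 1 0 = 0 ∧ A 1 1 = 0 := by omega
    rw [Matrix.det_fin_two, hz.1, hz.2.1, hz.2.2.1, hz.2.2.2] at hdet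
    norm_num at hdet
  | succ n ih =>
    intro A hs hdet hpos hne
    rw [Matrix.det_fin_two] at hdet
    set a := A 0 0 with ha'
    set b := A 0 1 with hb'
    set c := A 1 0 with hc'
    set d := A 1 1 with hd'
    have h00 := hpos 0 0; have h01 := hpos 0 1
    have h10 := hpos 1 0; have h11 := hpos 1 1
    rw [← ha'] at h00; rw [← hb'] at h01; rw [← hc'] at h10; rw [← hd'] at h11
    have hA : A = !![a, b; c, d] := Matrix.eta_fin_two A
    -- hdet : a * d - b * c = 1
    by_cases h1 : c ≤ a ∧ d ≤ b
    · -- A = L * B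
      obtain ⟨hca, hdb⟩ := h1
      set B : Matrix (Fin 2) (Fin 2) ℤ := !![a - c, b - d; c, d] with hB
      have hAB : A = Lmat * B := by
        rw [hA, hB, Lmat_mul]; ring_nf
      have hBdet : B.det = 1 := by
        rw [hB, Matrix.det_fin_two_of]; linarith
      have hBpos : ∀ i j, 0 ≤ B i j := by
        intro i j; fin_cases i <;> fin_cases j <;> simp [hB] <;> linarith
      have hcd : c + d ≠ 0 := by
        intro h
        have hc0 : c = 0 := by omega
        have hd0 : d = 0 := by omega
        rw [hc0, hd0] at hdet; simp at hdet
      by_cases hB1 : B = 1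
      · refine ⟨[(1, 0)], by simp, ?_⟩
        simp [hAB, hB1]
      · have hBs : (B 0 0 + B 0 1 + B 1 0 + B 1 1).toNat ≤ n := by
          have h' : B 0 0 + B 0 1 + B 1 0 + B 1 1 = a + b := by simp [hB]; ring
          rw [h']; omega
        obtain ⟨l, hl, hlp⟩ := ih B hBs hBdet hBpos hB1
        refine ⟨(1, 0) :: l, by simp, ?_⟩
        simp only [List.map_cons, List.prod_cons, pow_one, pow_zero, mul_one]
        rw [← hlp, ← hAB]
    · by_cases h2 : a ≤ c ∧ b ≤ d
      · -- A = R * B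
        obtain ⟨hac, hbd⟩ := h2
        set B : Matrix (Fin 2) (Fin 2) ℤ := !![a, b; c - a, d - b] with hB
        have hAB : A = Rmat * B := by
          rw [hA, hB, Rmat_mul]; ring_nf
        have hBdet : B.det = 1 := by
          rw [hB, Matrix.det_fin_two_of]; linarith
        have hBpos : ∀ i j, 0 ≤ B i j := by
          intro i j; fin_cases i <;> fin_cases j <;> simp [hB] <;> linarith
        have hab : a + b ≠ 0 := by
          intro h
          have ha0 : a = 0 := by omega
          have hb0 : b = 0 := by omega
          rw [ha0, hb0] at hdet; simp at hdet
        by_cases hB1 : B = 1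
        · refine ⟨[(0, 1)], by simp, ?_⟩
          simp [hAB, hB1]
        · have hBs : (B 0 0 + B 0 1 + B 1 0 + B 1 1).toNat ≤ n := by
            have h' : B 0 0 + B 0 1 + B 1 0 + B 1 1 = c + d := by simp [hB]; ring
            rw [h']; omega
          obtain ⟨l, hl, hlp⟩ := ih B hBs hBdet hBpos hB1
          refine ⟨(0, 1) :: l, by simp, ?_⟩
          simp only [List.map_cons, List.prod_cons, pow_one, pow_zero, one_mul]
          rw [← hlp, ← hAB]
      · exfalso
        push_neg at h1 h2
        rcases lt_trichotomy a c with h | h | h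
        · have hdb : d < b := h2 (le_of_lt h)
          -- c ≥ a + 1, b ≥ d + 1 : det ≤ -(a+d+1)
          nlinarith
        · have hdb : d < b := h2 (le_of_eq h)
          have hbd : b < d := h1 (ge_of_eq h)
          omega
        · have hbd : b < d := h1 (le_of_lt h)
          -- a > c, d > b : forces b = c = 0, a = d = 1, so A = 1
          have hb0 : b = 0 := by nlinarith
          have hc0 : c = 0 := by nlinarith
          have had : a * d = 1 := by rw [hb0, hc0] at hdet; linarith
          have ha1 : a = 1 := by nlinarith
          have hd1 : d = 1 := by nlinarith
          apply hne
          rw [hA, ha1, hb0, hc0, hd1]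
          exact (Matrix.eta_fin_two 1).symm.trans (by norm_num)

/-- Every matrix `A ≠ I` in `SL₂⁺(ℤ)` is a product `L^{n₁} R^{m₁} ⋯ L^{n_k} R^{m_k}`
with nonnegative integer exponents: `SL₂⁺(ℤ)` is positively generated by `L` and `R`. -/
theorem SL2pos_generated_by_L_R (A : Matrix (Fin 2) (Fin 2) ℤ)
    (hdet : A.det = 1) (hpos : ∀ i j, 0 ≤ A i j) (hne : A ≠ 1) :
    ∃ l : List (ℕ × ℕ), l ≠ [] ∧
      A = (l.map (fun nm => Lmat ^ nm.1 * Rmat ^ nm.2)).prod := by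
  exact key _ A le_rfl hdet hpos hne
end

section
/- Define the cutting sequence Cut(p/q) of a line segment from (0,0) to (q,p) with coprime positive integers p,q as the word in letters {x,y} recording, in order, whether the i-th crossing point of the segment with the integer grid (excluding endpoints) has integer x-coordinate (letter x) or integer y-coordinate (letter y). If p₁/q₁ <ₙ p₂/q₂ (i.e., p₂q₁ - p₁q₂ = 1) with both fractions in (0,∞), then Cut((p₁+p₂)/(q₁+q₂)) = Cut(p₁/q₁) · yx · Cut(p₂/q₂), where · denotes concatenation of words. -/
/-- The cutting sequence of the segment from `(0,0)` to `(q,p)`: the interior grid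
crossings occur at parameters `i/q` (vertical grid lines, letter `x` = `true`) and
`j/p` (horizontal grid lines, letter `y` = `false`); we list them in order along the
segment and record the letters. -/
def cutWord (p q : ℕ) : List Bool :=
  ((((List.range (q - 1)).map fun i => (((i : ℚ) + 1) / q, true)) ++
      ((List.range (p - 1)).map fun j => (((j : ℚ) + 1) / p, false))).mergeSort
    (fun a b => decide (a.1 ≤ b.1))).map Prod.snd

/- ## Auxiliary general lemmas -/

theorem cutAux_perm_eq_of_map_eq {α β : Type*} {f : α → β} :
    ∀ {l₁ l₂ : List α}, l₁.Perm l₂ → l₁.map f = l₂.map f → (l₁.map f).Nodup → l₁ = l₂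
  | [], l₂, h, _, _ => (h.nil_eq).symm ▸ rfl
  | a :: t₁, [], h, _, _ => absurd h (by simp)
  | a :: t₁, b :: t₂, h, hm, hnd => by
    simp only [List.map_cons, List.cons.injEq] at hm
    obtain ⟨hfab, hmt⟩ := hm
    have hab : a = b := by
      by_contra hne
      have ha2 : a ∈ t₂ := by
        have := h.mem_iff.mp (List.mem_cons_self (a := a) (l := t₁))
        simpa [hne] using this
      have hfm : f a ∈ t₂.map f := List.mem_map_of_mem (f := f) ha2
      simp only [List.map_cons, List.nodup_cons] at hnd
      rw [hmt] at hnd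
      exact hnd.1 hfm
    subst hab
    have := cutAux_perm_eq_of_map_eq (h.cons_inv) hmt (by
      simp only [List.map_cons, List.nodup_cons] at hnd; exact hnd.2)
    rw [this]

theorem cutAux_sorted_unique {l₁ l₂ : List (ℚ × Bool)} (h : l₁.Perm l₂)
    (s₁ : l₁.Pairwise (fun a b => a.1 ≤ b.1)) (s₂ : l₂.Pairwise (fun a b => a.1 ≤ b.1))
    (nd : (l₁.map Prod.fst).Nodup) : l₁ = l₂ := by
  refine cutAux_perm_eq_of_map_eq h ?_ nd
  exact List.Perm.eq_of_pairwise' (r := fun a b : ℚ => a ≤ b)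
    (List.Pairwise.map _ (fun _ _ hab => hab) s₁) (List.Pairwise.map _ (fun _ _ hab => hab) s₂) (h.map _)

theorem cutAux_cop {a b c d : ℕ} (h : c * a = d * b + 1) : Nat.Coprime a b := by
  have h1 : Nat.gcd a b ∣ c * a := Dvd.dvd.mul_left (Nat.gcd_dvd_left a b) c
  have h2 : Nat.gcd a b ∣ d * b := Dvd.dvd.mul_left (Nat.gcd_dvd_right a b) d
  have h3 : Nat.gcd a b ∣ 1 := by
    have := Nat.dvd_sub h1 h2
    simpa [h] using this
  exact Nat.dvd_one.mp h3

theorem cutAux_no_tie {m n a b : ℕ} (h : Nat.Coprime n m) (ha : 0 < a) (ha' : a < n) :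
    a * m ≠ b * n := by
  intro he
  have hd : n ∣ a * m := ⟨b, by rw [he, Nat.mul_comm]⟩
  have h2 : n ∣ a := h.dvd_of_dvd_mul_right hd
  have := Nat.le_of_dvd ha h2
  omega

section
variable {p₁ q₁ p₂ q₂ : ℕ}

/-- strict comparison transfer for the first segment -/
theorem cutAux_L1 (hq₁ : 0 < q₁) (hdet : p₂ * q₁ = p₁ * q₂ + 1)
    {a b : ℕ} (ha1 : 0 < a) (ha2 : a < q₁) :
    (a * p₁ < b * q₁ ↔ a * (p₁ + p₂) < b * (q₁ + q₂)) := by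
  have hPQ : q₁ * (p₁ + p₂) = p₁ * (q₁ + q₂) + 1 := by
    have e : q₁ * (p₁ + p₂) = p₁ * q₁ + p₂ * q₁ := by ring
    rw [e, hdet]; ring
  constructor
  · intro h
    refine Nat.lt_of_mul_lt_mul_left (a := q₁) ?_
    nlinarith [Nat.mul_le_mul_right (q₁ + q₂) h, hPQ, ha2]
  · intro h
    by_contra hc
    push_neg at hc
    have hco : Nat.Coprime q₁ p₁ := cutAux_cop (c := p₂) (d := q₂) (by rw [hdet]; ring)
    have hne : a * p₁ ≠ b * q₁ := cutAux_no_tie hco ha1 ha2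
    have hlt : b * q₁ < a * p₁ := by omega
    have h2 : q₁ * (b * (q₁ + q₂)) < q₁ * (a * (p₁ + p₂)) := by
      nlinarith [Nat.mul_le_mul_right (q₁ + q₂) hlt, hPQ, ha1]
    have := Nat.lt_of_mul_lt_mul_left h2
    omega

/-- non-strict version for the first segment -/
theorem cutAux_L1le (hq₁ : 0 < q₁) (hq₂ : 0 < q₂) (hdet : p₂ * q₁ = p₁ * q₂ + 1)
    {a b : ℕ} (ha1 : 0 < a) (ha2 : a < q₁) :
    (a * p₁ ≤ b * q₁ ↔ a * (p₁ + p₂) ≤ b * (q₁ + q₂)) := by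
  have h1 := cutAux_L1 (p₁ := p₁) (p₂ := p₂) hq₁ hdet ha1 ha2 (b := b)
  have hco : Nat.Coprime q₁ p₁ := cutAux_cop (c := p₂) (d := q₂) (by rw [hdet]; ring)
  have ht1 : a * p₁ ≠ b * q₁ := cutAux_no_tie hco ha1 ha2
  have hPQ : q₁ * (p₁ + p₂) = p₁ * (q₁ + q₂) + 1 := by
    have e : q₁ * (p₁ + p₂) = p₁ * q₁ + p₂ * q₁ := by ring
    rw [e, hdet]; ring
  have hcoPQ : Nat.Coprime (q₁ + q₂) (p₁ + p₂) :=
    (cutAux_cop (c := q₁) (d := p₁) hPQ).symm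
  have ht2 : a * (p₁ + p₂) ≠ b * (q₁ + q₂) :=
    cutAux_no_tie hcoPQ ha1 (by omega)
  omega

/-- strict comparison transfer for the second segment -/
theorem cutAux_L2 (hq₂ : 0 < q₂) (hdet : p₂ * q₁ = p₁ * q₂ + 1)
    {a b : ℕ} (ha1 : 0 < a) (ha2 : a < q₂) :
    (a * p₂ < b * q₂ ↔ (a + q₁) * (p₁ + p₂) < (b + p₁) * (q₁ + q₂)) := by
  have hPQ2 : q₂ * (p₁ + p₂) + 1 = p₂ * (q₁ + q₂) := by
    have e : p₂ * (q₁ + q₂) = p₂ * q₁ + p₂ * q₂ := by ring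
    rw [e, hdet]; ring
  constructor
  · intro h
    refine Nat.lt_of_mul_lt_mul_left (a := q₂) ?_
    nlinarith [Nat.mul_le_mul_right (q₁ + q₂) h, hPQ2, ha2]
  · intro h
    by_contra hc
    push_neg at hc
    have hco : Nat.Coprime q₂ p₂ :=
      (cutAux_cop (a := p₂) (b := q₂) (c := q₁) (d := p₁)
        (by rw [Nat.mul_comm q₁ p₂, hdet])).symm
    have hne : a * p₂ ≠ b * q₂ := cutAux_no_tie hco ha1 ha2
    have hlt : b * q₂ < a * p₂ := by omega
    have h2 : q₂ * ((b + p₁) * (q₁ + q₂)) < q₂ * ((a + q₁) * (p₁ + p₂)) := by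
      nlinarith [Nat.mul_le_mul_right (q₁ + q₂) hlt, hPQ2, ha1, ha2]
    have := Nat.lt_of_mul_lt_mul_left h2
    omega

/-- non-strict version for the second segment -/
theorem cutAux_L2le (hq₁ : 0 < q₁) (hq₂ : 0 < q₂) (hdet : p₂ * q₁ = p₁ * q₂ + 1)
    {a b : ℕ} (ha1 : 0 < a) (ha2 : a < q₂) :
    (a * p₂ ≤ b * q₂ ↔ (a + q₁) * (p₁ + p₂) ≤ (b + p₁) * (q₁ + q₂)) := by
  have h1 := cutAux_L2 (p₁ := p₁) (q₁ := q₁) hq₂ hdet ha1 ha2 (b := b)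
  have hco : Nat.Coprime q₂ p₂ :=
    (cutAux_cop (a := p₂) (b := q₂) (c := q₁) (d := p₁)
      (by rw [Nat.mul_comm q₁ p₂, hdet])).symm
  have ht1 : a * p₂ ≠ b * q₂ := cutAux_no_tie hco ha1 ha2
  have hPQ : q₁ * (p₁ + p₂) = p₁ * (q₁ + q₂) + 1 := by
    have e : q₁ * (p₁ + p₂) = p₁ * q₁ + p₂ * q₁ := by ring
    rw [e, hdet]; ring
  have hcoPQ : Nat.Coprime (q₁ + q₂) (p₁ + p₂) :=
    (cutAux_cop (c := q₁) (d := p₁) hPQ).symm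
  have ht2 : (a + q₁) * (p₁ + p₂) ≠ (b + p₁) * (q₁ + q₂) :=
    cutAux_no_tie hcoPQ (by omega) (by omega)
  omega

end

theorem cutWord_eq (p q : ℕ) : cutWord p q =
    ((((List.range (q - 1)).map fun i : ℕ => (((i : ℚ) + 1) / (q : ℚ), true)) ++
      ((List.range (p - 1)).map fun j : ℕ => (((j : ℚ) + 1) / (p : ℚ), false))).mergeSort
    (fun a b => decide (a.1 ≤ b.1))).map Prod.snd := by
  have hb : ∀ l : List ℕ, (l.flatMap fun a => [((a : ℕ) : ℚ)]) = l.map (fun a : ℕ => (a : ℚ)) := by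
    intro l; induction l <;> simp_all
  unfold cutWord
  simp only [bind_pure_comp, Functor.map, hb, List.map_map, Function.comp]
  try rfl

section
variable {p₁ q₁ p₂ q₂ : ℕ}

theorem cutAux_seg1 (hp₁ : 0 < p₁) (hq₁ : 0 < q₁) (hp₂ : 0 < p₂) (hq₂ : 0 < q₂)
    (hdet : p₂ * q₁ = p₁ * q₂ + 1) :
    cutWord p₁ q₁ =
      ((((List.range (q₁ - 1)).map fun i : ℕ => (((i : ℚ) + 1) / ((q₁ + q₂ : ℕ) : ℚ), true)) ++
        ((List.range (p₁ - 1)).map fun j : ℕ => (((j : ℚ) + 1) / ((p₁ + p₂ : ℕ) : ℚ), false))).mergeSort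
        (fun a b => decide (a.1 ≤ b.1))).map Prod.snd := by
  have hq₁Q : (0:ℚ) < (q₁ : ℚ) := by exact_mod_cast hq₁
  have hp₁Q : (0:ℚ) < (p₁ : ℚ) := by exact_mod_cast hp₁
  have hQQ : (0:ℚ) < ((q₁ + q₂ : ℕ) : ℚ) := by exact_mod_cast Nat.add_pos_left hq₁ q₂
  have hPP : (0:ℚ) < ((p₁ + p₂ : ℕ) : ℚ) := by exact_mod_cast Nat.add_pos_left hp₁ p₂
  set f₁ : ℚ × Bool → ℚ × Bool := fun a =>
    (if a.2 = true then a.1 * q₁ / ((q₁ + q₂ : ℕ) : ℚ) else a.1 * p₁ / ((p₁ + p₂ : ℕ) : ℚ), a.2)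
    with hf₁
  set l₁ : List (ℚ × Bool) :=
    (((List.range (q₁ - 1)).map fun i : ℕ => (((i : ℚ) + 1) / (q₁ : ℚ), true)) ++
      ((List.range (p₁ - 1)).map fun j : ℕ => (((j : ℚ) + 1) / (p₁ : ℚ), false))) with hl₁
  have hmem : ∀ a ∈ l₁, (∃ i, i < q₁ - 1 ∧ a = (((i : ℚ) + 1) / (q₁ : ℚ), true)) ∨
      (∃ j, j < p₁ - 1 ∧ a = (((j : ℚ) + 1) / (p₁ : ℚ), false)) := by
    intro a ha
    rw [hl₁, List.mem_append] at ha
    rcases ha with ha | ha <;> [left; right] <;>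
      · obtain ⟨i, hi, rfl⟩ := List.mem_map.mp ha
        exact ⟨i, List.mem_range.mp hi, rfl⟩
  have hfx : ∀ i : ℕ, f₁ (((i : ℚ) + 1) / (q₁ : ℚ), true) =
      (((i : ℚ) + 1) / ((q₁ + q₂ : ℕ) : ℚ), true) := by
    intro i
    simp only [hf₁]
    norm_num
    rw [div_mul_cancel₀ _ (ne_of_gt hq₁Q)]
  have hfy : ∀ j : ℕ, f₁ (((j : ℚ) + 1) / (p₁ : ℚ), false) =
      (((j : ℚ) + 1) / ((p₁ + p₂ : ℕ) : ℚ), false) := by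
    intro j
    simp only [hf₁]
    norm_num
    rw [div_mul_cancel₀ _ (ne_of_gt hp₁Q)]
  have hmapf : l₁.map f₁ =
      (((List.range (q₁ - 1)).map fun i : ℕ => (((i : ℚ) + 1) / ((q₁ + q₂ : ℕ) : ℚ), true)) ++
        ((List.range (p₁ - 1)).map fun j : ℕ => (((j : ℚ) + 1) / ((p₁ + p₂ : ℕ) : ℚ), false))) := by
    rw [hl₁, List.map_append, List.map_map, List.map_map]
    congr 1
    · exact List.map_congr_left fun i _ => hfx i
    · exact List.map_congr_left fun j _ => hfy j
  have hcmp : ∀ a ∈ l₁, ∀ b ∈ l₁,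
      decide (a.1 ≤ b.1) = decide ((f₁ a).1 ≤ (f₁ b).1) := by
    intro a ha b hb
    rcases hmem a ha with ⟨i, hi, rfl⟩ | ⟨j, hj, rfl⟩ <;>
      rcases hmem b hb with ⟨i', hi', rfl⟩ | ⟨j', hj', rfl⟩
    · rw [hfx, hfx]
      simp only [decide_eq_decide]
      skip
      rw [div_le_div_iff₀ hq₁Q hq₁Q, div_le_div_iff₀ hQQ hQQ]
      constructor <;> intro h <;> nlinarith
    · rw [hfx, hfy]
      simp only [decide_eq_decide]
      skip
      rw [div_le_div_iff₀ hq₁Q hp₁Q, div_le_div_iff₀ hQQ hPP]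
      have h := cutAux_L1le (p₁ := p₁) (p₂ := p₂) hq₁ hq₂ hdet
        (a := i + 1) (b := j' + 1) (by omega) (by omega)
      push_cast
      exact_mod_cast h
    · rw [hfy, hfx]
      simp only [decide_eq_decide]
      skip
      rw [div_le_div_iff₀ hp₁Q hq₁Q, div_le_div_iff₀ hPP hQQ]
      have h := cutAux_L1 (p₁ := p₁) (p₂ := p₂) hq₁ hdet
        (a := i' + 1) (b := j + 1) (by omega) (by omega)
      have h2 : ((j + 1) * q₁ ≤ (i' + 1) * p₁ ↔
          (j + 1) * (q₁ + q₂) ≤ (i' + 1) * (p₁ + p₂)) := by omega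
      push_cast
      exact_mod_cast h2
    · rw [hfy, hfy]
      simp only [decide_eq_decide]
      skip
      rw [div_le_div_iff₀ hp₁Q hp₁Q, div_le_div_iff₀ hPP hPP]
      constructor <;> intro h <;> nlinarith
  have hsnd : Prod.snd ∘ f₁ = Prod.snd := rfl
  calc cutWord p₁ q₁ = ((l₁.mergeSort fun a b => decide (a.1 ≤ b.1)).map Prod.snd) := by
        rw [cutWord_eq, hl₁]
    _ = (((l₁.mergeSort fun a b => decide (a.1 ≤ b.1)).map f₁).map Prod.snd) := by
        rw [List.map_map, hsnd]
    _ = (((l₁.map f₁).mergeSort fun a b => decide (a.1 ≤ b.1)).map Prod.snd) := by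
        rw [List.map_mergeSort (s := fun a b : ℚ × Bool => decide (a.1 ≤ b.1)) hcmp]
    _ = _ := by rw [hmapf]

theorem cutAux_seg2 (hp₁ : 0 < p₁) (hq₁ : 0 < q₁) (hp₂ : 0 < p₂) (hq₂ : 0 < q₂)
    (hdet : p₂ * q₁ = p₁ * q₂ + 1) :
    cutWord p₂ q₂ =
      ((((List.range (q₂ - 1)).map fun i : ℕ => (((i : ℚ) + 1 + q₁) / ((q₁ + q₂ : ℕ) : ℚ), true)) ++
        ((List.range (p₂ - 1)).map fun j : ℕ => (((j : ℚ) + 1 + p₁) / ((p₁ + p₂ : ℕ) : ℚ), false))).mergeSort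
        (fun a b => decide (a.1 ≤ b.1))).map Prod.snd := by
  have hq₂Q : (0:ℚ) < (q₂ : ℚ) := by exact_mod_cast hq₂
  have hp₂Q : (0:ℚ) < (p₂ : ℚ) := by exact_mod_cast hp₂
  have hQQ : (0:ℚ) < ((q₁ + q₂ : ℕ) : ℚ) := by exact_mod_cast Nat.add_pos_left hq₁ q₂
  have hPP : (0:ℚ) < ((p₁ + p₂ : ℕ) : ℚ) := by exact_mod_cast Nat.add_pos_left hp₁ p₂
  set f₂ : ℚ × Bool → ℚ × Bool := fun a =>
    (if a.2 = true then (a.1 * q₂ + q₁) / ((q₁ + q₂ : ℕ) : ℚ)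
      else (a.1 * p₂ + p₁) / ((p₁ + p₂ : ℕ) : ℚ), a.2) with hf₂
  set l₂ : List (ℚ × Bool) :=
    (((List.range (q₂ - 1)).map fun i : ℕ => (((i : ℚ) + 1) / (q₂ : ℚ), true)) ++
      ((List.range (p₂ - 1)).map fun j : ℕ => (((j : ℚ) + 1) / (p₂ : ℚ), false))) with hl₂
  have hmem : ∀ a ∈ l₂, (∃ i, i < q₂ - 1 ∧ a = (((i : ℚ) + 1) / (q₂ : ℚ), true)) ∨
      (∃ j, j < p₂ - 1 ∧ a = (((j : ℚ) + 1) / (p₂ : ℚ), false)) := by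
    intro a ha
    rw [hl₂, List.mem_append] at ha
    rcases ha with ha | ha <;> [left; right] <;>
      · obtain ⟨i, hi, rfl⟩ := List.mem_map.mp ha
        exact ⟨i, List.mem_range.mp hi, rfl⟩
  have hfx : ∀ i : ℕ, f₂ (((i : ℚ) + 1) / (q₂ : ℚ), true) =
      (((i : ℚ) + 1 + q₁) / ((q₁ + q₂ : ℕ) : ℚ), true) := by
    intro i
    simp only [hf₂]
    norm_num
    rw [div_mul_cancel₀ _ (ne_of_gt hq₂Q)]
  have hfy : ∀ j : ℕ, f₂ (((j : ℚ) + 1) / (p₂ : ℚ), false) =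
      (((j : ℚ) + 1 + p₁) / ((p₁ + p₂ : ℕ) : ℚ), false) := by
    intro j
    simp only [hf₂]
    norm_num
    rw [div_mul_cancel₀ _ (ne_of_gt hp₂Q)]
  have hmapf : l₂.map f₂ =
      (((List.range (q₂ - 1)).map fun i : ℕ => (((i : ℚ) + 1 + q₁) / ((q₁ + q₂ : ℕ) : ℚ), true)) ++
        ((List.range (p₂ - 1)).map fun j : ℕ => (((j : ℚ) + 1 + p₁) / ((p₁ + p₂ : ℕ) : ℚ), false))) := by
    rw [hl₂, List.map_append, List.map_map, List.map_map]
    congr 1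
    · exact List.map_congr_left fun i _ => hfx i
    · exact List.map_congr_left fun j _ => hfy j
  have hcmp : ∀ a ∈ l₂, ∀ b ∈ l₂,
      decide (a.1 ≤ b.1) = decide ((f₂ a).1 ≤ (f₂ b).1) := by
    intro a ha b hb
    rcases hmem a ha with ⟨i, hi, rfl⟩ | ⟨j, hj, rfl⟩ <;>
      rcases hmem b hb with ⟨i', hi', rfl⟩ | ⟨j', hj', rfl⟩
    · rw [hfx, hfx]
      simp only [decide_eq_decide]
      rw [div_le_div_iff₀ hq₂Q hq₂Q, div_le_div_iff₀ hQQ hQQ]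
      constructor <;> intro h <;> nlinarith
    · rw [hfx, hfy]
      simp only [decide_eq_decide]
      rw [div_le_div_iff₀ hq₂Q hp₂Q, div_le_div_iff₀ hQQ hPP]
      have h := cutAux_L2le (p₁ := p₁) (p₂ := p₂) hq₁ hq₂ hdet
        (a := i + 1) (b := j' + 1) (by omega) (by omega)
      push_cast
      exact_mod_cast h
    · rw [hfy, hfx]
      simp only [decide_eq_decide]
      rw [div_le_div_iff₀ hp₂Q hq₂Q, div_le_div_iff₀ hPP hQQ]
      have h := cutAux_L2 (p₁ := p₁) (q₁ := q₁) hq₂ hdet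
        (a := i' + 1) (b := j + 1) (by omega) (by omega)
      have h2 : ((j + 1) * q₂ ≤ (i' + 1) * p₂ ↔
          ((j + 1) + p₁) * (q₁ + q₂) ≤ ((i' + 1) + q₁) * (p₁ + p₂)) := by omega
      push_cast
      exact_mod_cast h2
    · rw [hfy, hfy]
      simp only [decide_eq_decide]
      rw [div_le_div_iff₀ hp₂Q hp₂Q, div_le_div_iff₀ hPP hPP]
      constructor <;> intro h <;> nlinarith
  have hsnd : Prod.snd ∘ f₂ = Prod.snd := rfl
  calc cutWord p₂ q₂ = ((l₂.mergeSort fun a b => decide (a.1 ≤ b.1)).map Prod.snd) := by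
        rw [cutWord_eq, hl₂]
    _ = (((l₂.mergeSort fun a b => decide (a.1 ≤ b.1)).map f₂).map Prod.snd) := by
        rw [List.map_map, hsnd]
    _ = (((l₂.map f₂).mergeSort fun a b => decide (a.1 ≤ b.1)).map Prod.snd) := by
        rw [List.map_mergeSort (s := fun a b : ℚ × Bool => decide (a.1 ≤ b.1)) hcmp]
    _ = _ := by rw [hmapf]

theorem cutAux_main (hp₁ : 0 < p₁) (hq₁ : 0 < q₁) (hp₂ : 0 < p₂) (hq₂ : 0 < q₂)
    (hdet : p₂ * q₁ = p₁ * q₂ + 1) :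
    ((((List.range ((q₁ + q₂) - 1)).map fun i : ℕ => (((i : ℚ) + 1) / ((q₁ + q₂ : ℕ) : ℚ), true)) ++
      ((List.range ((p₁ + p₂) - 1)).map fun j : ℕ => (((j : ℚ) + 1) / ((p₁ + p₂ : ℕ) : ℚ), false))).mergeSort
      (fun a b => decide (a.1 ≤ b.1)))
    = ((((List.range (q₁ - 1)).map fun i : ℕ => (((i : ℚ) + 1) / ((q₁ + q₂ : ℕ) : ℚ), true)) ++
        ((List.range (p₁ - 1)).map fun j : ℕ => (((j : ℚ) + 1) / ((p₁ + p₂ : ℕ) : ℚ), false))).mergeSort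
        (fun a b => decide (a.1 ≤ b.1)))
      ++ (((p₁ : ℚ) / ((p₁ + p₂ : ℕ) : ℚ), false) :: ((q₁ : ℚ) / ((q₁ + q₂ : ℕ) : ℚ), true) ::
        ((((List.range (q₂ - 1)).map fun i : ℕ => (((i : ℚ) + 1 + q₁) / ((q₁ + q₂ : ℕ) : ℚ), true)) ++
          ((List.range (p₂ - 1)).map fun j : ℕ => (((j : ℚ) + 1 + p₁) / ((p₁ + p₂ : ℕ) : ℚ), false))).mergeSort
          (fun a b => decide (a.1 ≤ b.1)))) := by
  have hQQ : (0:ℚ) < ((q₁ + q₂ : ℕ) : ℚ) := by exact_mod_cast Nat.add_pos_left hq₁ q₂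
  have hPP : (0:ℚ) < ((p₁ + p₂ : ℕ) : ℚ) := by exact_mod_cast Nat.add_pos_left hp₁ p₂
  have hPQ : q₁ * (p₁ + p₂) = p₁ * (q₁ + q₂) + 1 := by
    have e : q₁ * (p₁ + p₂) = p₁ * q₁ + p₂ * q₁ := by ring
    rw [e, hdet]; ring
  have hcoPQ : Nat.Coprime (q₁ + q₂) (p₁ + p₂) := (cutAux_cop (c := q₁) (d := p₁) hPQ).symm
  set r : ℚ × Bool → ℚ × Bool → Bool := fun a b => decide (a.1 ≤ b.1) with hrr
  have htrans : ∀ a b c : ℚ × Bool, r a b → r b c → r a c := by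
    intro a b c
    simp only [hrr, decide_eq_true_eq]
    exact le_trans
  have htotal : ∀ a b : ℚ × Bool, r a b || r b a := by
    intro a b
    simp only [hrr]
    simpa using le_total a.1 b.1
  set A1 : List (ℚ × Bool) :=
    (List.range (q₁ - 1)).map fun i : ℕ => (((i : ℚ) + 1) / ((q₁ + q₂ : ℕ) : ℚ), true) with hA1
  set B1 : List (ℚ × Bool) :=
    (List.range (p₁ - 1)).map fun j : ℕ => (((j : ℚ) + 1) / ((p₁ + p₂ : ℕ) : ℚ), false) with hB1
  set A2 : List (ℚ × Bool) :=
    (List.range (q₂ - 1)).map fun i : ℕ => (((i : ℚ) + 1 + q₁) / ((q₁ + q₂ : ℕ) : ℚ), true) with hA2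
  set B2 : List (ℚ × Bool) :=
    (List.range (p₂ - 1)).map fun j : ℕ => (((j : ℚ) + 1 + p₁) / ((p₁ + p₂ : ℕ) : ℚ), false) with hB2
  set x : ℚ × Bool := ((q₁ : ℚ) / ((q₁ + q₂ : ℕ) : ℚ), true) with hx
  set y : ℚ × Bool := ((p₁ : ℚ) / ((p₁ + p₂ : ℕ) : ℚ), false) with hy
  -- splitting of the big range lists
  have hsplitA : (List.range ((q₁ + q₂) - 1)).map
      (fun i : ℕ => (((i : ℚ) + 1) / ((q₁ + q₂ : ℕ) : ℚ), true)) = A1 ++ x :: A2 := by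
    have h1 : (q₁ + q₂) - 1 = q₁ + (q₂ - 1) := by omega
    have h2 : q₁ = (q₁ - 1) + 1 := by omega
    have hassoc : A1 ++ x :: A2 = (A1 ++ [x]) ++ A2 := by
      rw [List.append_assoc]; rfl
    rw [h1, List.range_add, List.map_append, hassoc]
    congr 1
    · have hr : List.range q₁ = List.range (q₁ - 1) ++ [q₁ - 1] := by
        rw [← List.range_succ]
        congr 1
        all_goals omega
      rw [hr, List.map_append]
      congr 1
      show _ = [x]
      rw [hx]
      simp only [List.map_cons, List.map_nil]
      have hc : ((q₁ - 1 : ℕ) : ℚ) + 1 = (q₁ : ℚ) := by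
        have h3 := Nat.cast_sub (by omega : 1 ≤ q₁) (R := ℚ)
        push_cast at h3
        rw [h3]; ring
      rw [hc]
    · rw [hA2, List.map_map]
      refine List.map_congr_left fun i _ => ?_
      simp only [Function.comp]
      congr 1
      push_cast
      ring
  have hsplitB : (List.range ((p₁ + p₂) - 1)).map
      (fun j : ℕ => (((j : ℚ) + 1) / ((p₁ + p₂ : ℕ) : ℚ), false)) = B1 ++ y :: B2 := by
    have h1 : (p₁ + p₂) - 1 = p₁ + (p₂ - 1) := by omega
    have h2 : p₁ = (p₁ - 1) + 1 := by omega
    have hassoc : B1 ++ y :: B2 = (B1 ++ [y]) ++ B2 := by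
      rw [List.append_assoc]; rfl
    rw [h1, List.range_add, List.map_append, hassoc]
    congr 1
    · have hr : List.range p₁ = List.range (p₁ - 1) ++ [p₁ - 1] := by
        rw [← List.range_succ]
        congr 1
        all_goals omega
      rw [hr, List.map_append]
      congr 1
      show _ = [y]
      rw [hy]
      simp only [List.map_cons, List.map_nil]
      have hc : ((p₁ - 1 : ℕ) : ℚ) + 1 = (p₁ : ℚ) := by
        have h3 := Nat.cast_sub (by omega : 1 ≤ p₁) (R := ℚ)
        push_cast at h3
        rw [h3]; ring
      rw [hc]
    · rw [hB2, List.map_map]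
      refine List.map_congr_left fun j _ => ?_
      simp only [Function.comp]
      congr 1
      push_cast
      ring
  -- bounds on elements
  have hS1mem : ∀ a ∈ (A1 ++ B1).mergeSort r, a.1 ≤ y.1 := by
    intro a ha
    rw [List.mem_mergeSort, List.mem_append] at ha
    rcases ha with ha | ha
    · obtain ⟨i, hi, rfl⟩ := List.mem_map.mp ha
      rw [List.mem_range] at hi
      rw [hy]
      show ((i : ℚ) + 1) / ((q₁ + q₂ : ℕ) : ℚ) ≤ (p₁ : ℚ) / ((p₁ + p₂ : ℕ) : ℚ)
      rw [div_le_div_iff₀ hQQ hPP]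
      have key : (i + 1) * (p₁ + p₂) ≤ p₁ * (q₁ + q₂) := by
        refine Nat.le_of_mul_le_mul_left ?_ hq₁
        have e1 : q₁ * ((i + 1) * (p₁ + p₂)) = (i + 1) * (p₁ * (q₁ + q₂)) + (i + 1) := by
          calc q₁ * ((i + 1) * (p₁ + p₂)) = (i + 1) * (q₁ * (p₁ + p₂)) := by ring
            _ = (i + 1) * (p₁ * (q₁ + q₂) + 1) := by rw [hPQ]
            _ = (i + 1) * (p₁ * (q₁ + q₂)) + (i + 1) := by ring
        have e2 := Nat.mul_le_mul_right (p₁ * (q₁ + q₂)) (show (i + 1) + 1 ≤ q₁ by omega)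
        have e2' : ((i + 1) + 1) * (p₁ * (q₁ + q₂)) =
            (i + 1) * (p₁ * (q₁ + q₂)) + p₁ * (q₁ + q₂) := by ring
        have e3 : (i + 1) < p₁ * (q₁ + q₂) :=
          lt_of_lt_of_le (show i + 1 < q₁ + q₂ by omega) (Nat.le_mul_of_pos_left _ hp₁)
        omega
      exact_mod_cast key
    · obtain ⟨j, hj, rfl⟩ := List.mem_map.mp ha
      rw [List.mem_range] at hj
      rw [hy]
      show ((j : ℚ) + 1) / ((p₁ + p₂ : ℕ) : ℚ) ≤ (p₁ : ℚ) / ((p₁ + p₂ : ℕ) : ℚ)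
      rw [div_le_div_iff₀ hPP hPP]
      have key : (j + 1) * (p₁ + p₂) ≤ p₁ * (p₁ + p₂) :=
        Nat.mul_le_mul_right _ (by omega)
      exact_mod_cast key
  have hyx : y.1 ≤ x.1 := by
    rw [hx, hy]
    show (p₁ : ℚ) / ((p₁ + p₂ : ℕ) : ℚ) ≤ (q₁ : ℚ) / ((q₁ + q₂ : ℕ) : ℚ)
    rw [div_le_div_iff₀ hPP hQQ]
    have key : p₁ * (q₁ + q₂) ≤ q₁ * (p₁ + p₂) := by omega
    exact_mod_cast key
  have hS2mem : ∀ a ∈ (A2 ++ B2).mergeSort r, x.1 ≤ a.1 := by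
    intro a ha
    rw [List.mem_mergeSort, List.mem_append] at ha
    rcases ha with ha | ha
    · obtain ⟨i, hi, rfl⟩ := List.mem_map.mp ha
      rw [hx]
      show (q₁ : ℚ) / ((q₁ + q₂ : ℕ) : ℚ) ≤ ((i : ℚ) + 1 + q₁) / ((q₁ + q₂ : ℕ) : ℚ)
      rw [div_le_div_iff₀ hQQ hQQ]
      have key : (q₁ : ℕ) * (q₁ + q₂) ≤ (i + 1 + q₁) * (q₁ + q₂) :=
        Nat.mul_le_mul_right _ (by omega)
      exact_mod_cast key
    · obtain ⟨j, hj, rfl⟩ := List.mem_map.mp ha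
      rw [hx]
      show (q₁ : ℚ) / ((q₁ + q₂ : ℕ) : ℚ) ≤ ((j : ℚ) + 1 + p₁) / ((p₁ + p₂ : ℕ) : ℚ)
      rw [div_le_div_iff₀ hQQ hPP]
      have key : q₁ * (p₁ + p₂) ≤ (j + 1 + p₁) * (q₁ + q₂) := by
        have e2 := Nat.mul_le_mul_right (q₁ + q₂) (show p₁ + 1 ≤ j + 1 + p₁ by omega)
        have e2' : (p₁ + 1) * (q₁ + q₂) = p₁ * (q₁ + q₂) + (q₁ + q₂) := by ring
        omega
      exact_mod_cast key
  -- permutation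
  have hperm : ((((List.range ((q₁ + q₂) - 1)).map
        fun i : ℕ => (((i : ℚ) + 1) / ((q₁ + q₂ : ℕ) : ℚ), true)) ++
      ((List.range ((p₁ + p₂) - 1)).map
        fun j : ℕ => (((j : ℚ) + 1) / ((p₁ + p₂ : ℕ) : ℚ), false))).mergeSort r).Perm
      (((A1 ++ B1).mergeSort r) ++ y :: x :: ((A2 ++ B2).mergeSort r)) := by
    have h1 := List.mergeSort_perm ((((List.range ((q₁ + q₂) - 1)).map
        fun i : ℕ => (((i : ℚ) + 1) / ((q₁ + q₂ : ℕ) : ℚ), true)) ++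
      ((List.range ((p₁ + p₂) - 1)).map
        fun j : ℕ => (((j : ℚ) + 1) / ((p₁ + p₂ : ℕ) : ℚ), false)))) r
    have h2 : ((A1 ++ x :: A2) ++ (B1 ++ y :: B2)).Perm
        ((A1 ++ B1) ++ y :: x :: (A2 ++ B2)) := by
      rw [← Multiset.coe_eq_coe]
      simp only [← Multiset.cons_coe, ← Multiset.coe_add, ← Multiset.singleton_add]
      abel
    have h3 : ((A1 ++ B1) ++ y :: x :: (A2 ++ B2)).Perm
        (((A1 ++ B1).mergeSort r) ++ y :: x :: ((A2 ++ B2).mergeSort r)) :=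
      List.Perm.append (List.mergeSort_perm _ _).symm
        (((List.mergeSort_perm _ _).symm.cons x).cons y)
    refine h1.trans ?_
    rw [hsplitA, hsplitB]
    exact h2.trans h3
  -- nodup of the keys
  have hnodup : ((((List.range ((q₁ + q₂) - 1)).map
        fun i : ℕ => (((i : ℚ) + 1) / ((q₁ + q₂ : ℕ) : ℚ), true)) ++
      ((List.range ((p₁ + p₂) - 1)).map
        fun j : ℕ => (((j : ℚ) + 1) / ((p₁ + p₂ : ℕ) : ℚ), false))).map Prod.fst).Nodup := by
    rw [List.map_append, List.map_map, List.map_map]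
    refine List.Nodup.append ?_ ?_ ?_
    · refine List.Nodup.map_on ?_ List.nodup_range
      intro a _ b _ hab
      simp only [Function.comp] at hab
      field_simp at hab
      have hab' : a + 1 = b + 1 := by exact_mod_cast hab
      omega
    · refine List.Nodup.map_on ?_ List.nodup_range
      intro a _ b _ hab
      simp only [Function.comp] at hab
      field_simp at hab
      have hab' : a + 1 = b + 1 := by exact_mod_cast hab
      omega
    · intro k hk1 hk2
      obtain ⟨i, hi, rfl⟩ := List.mem_map.mp hk1
      obtain ⟨j, hj, he⟩ := List.mem_map.mp hk2
      rw [List.mem_range] at hi hj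
      simp only [Function.comp] at he
      rw [div_eq_div_iff (ne_of_gt hPP) (ne_of_gt hQQ)] at he
      have : (j + 1) * (q₁ + q₂) = (i + 1) * (p₁ + p₂) := by exact_mod_cast he
      exact cutAux_no_tie (b := j + 1) hcoPQ (show 0 < i + 1 by omega)
        (show i + 1 < q₁ + q₂ by omega) this.symm
  -- sortedness of both sides
  have hsorted : ∀ l : List (ℚ × Bool), (l.mergeSort r).Pairwise (fun a b => a.1 ≤ b.1) :=
    fun l => (List.pairwise_mergeSort htrans htotal l).imp (fun h => of_decide_eq_true h)
  refine cutAux_sorted_unique hperm (hsorted _) ?_ ?_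
  · rw [List.pairwise_append]
    refine ⟨hsorted _, ?_, ?_⟩
    · rw [List.pairwise_cons]
      refine ⟨?_, ?_⟩
      · intro b hb
        rcases List.mem_cons.mp hb with rfl | hb
        · exact hyx
        · exact le_trans hyx (hS2mem b hb)
      · rw [List.pairwise_cons]
        exact ⟨fun b hb => hS2mem b hb, hsorted _⟩
    · intro a ha b hb
      rcases List.mem_cons.mp hb with rfl | hb
      · exact hS1mem a ha
      rcases List.mem_cons.mp hb with rfl | hb
      · exact le_trans (hS1mem a ha) hyx
      · exact le_trans (hS1mem a ha) (le_trans hyx (hS2mem b hb))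
  · have hpm := (List.mergeSort_perm ((((List.range ((q₁ + q₂) - 1)).map
        fun i : ℕ => (((i : ℚ) + 1) / ((q₁ + q₂ : ℕ) : ℚ), true)) ++
      ((List.range ((p₁ + p₂) - 1)).map
        fun j : ℕ => (((j : ℚ) + 1) / ((p₁ + p₂ : ℕ) : ℚ), false)))) r).map Prod.fst
    exact (hpm.nodup_iff).mpr hnodup

end

/-- Additivity of cutting sequences: if `p₁/q₁ <ₙ p₂/q₂` are Farey neighbors in `(0,∞)`,
then `Cut((p₁+p₂)/(q₁+q₂)) = Cut(p₁/q₁) · yx · Cut(p₂/q₂)`. -/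
theorem cut_mediant (p₁ q₁ p₂ q₂ : ℕ) (hp₁ : 0 < p₁) (hq₁ : 0 < q₁)
    (hp₂ : 0 < p₂) (hq₂ : 0 < q₂)
    (hdet : p₂ * q₁ = p₁ * q₂ + 1) :
    cutWord (p₁ + p₂) (q₁ + q₂) =
      cutWord p₁ q₁ ++ [false, true] ++ cutWord p₂ q₂ := by
  rw [cutWord_eq (p₁ + p₂) (q₁ + q₂)]
  rw [cutAux_main hp₁ hq₁ hp₂ hq₂ hdet]
  rw [List.map_append, List.map_cons, List.map_cons]
  rw [← cutAux_seg1 hp₁ hq₁ hp₂ hq₂ hdet, ← cutAux_seg2 hp₁ hq₁ hp₂ hq₂ hdet]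
  simp
end

section
/- Let p₁/q₁ <ₙ p₂/q₂ be Farey neighbors with left codes satisfying the multiplicativity Code^L(r ⊕ r') = Code^L(r)·Code^L(r'). Then Code^R(p₂/q₂) = Code^L(p₁/q₁)·Code^L(p₂/q₂)·Code^L(p₁/q₁)⁻¹, where Code^R(r ⊕ r') = Code^R(r')·Code^R(r) and Code^R(p₁/q₁⊕p₂/q₂) = Code^L(p₁/q₁⊕p₂/q₂) composed with the relevant commutator, all as elements of S_n. -/
/-- Let `r₁ <ₙ r₂` be Farey neighbors with mediant `m`.  If left codes multiply as
`Code^L(m) = Code^L(r₁)·Code^L(r₂)`, right codes as `Code^R(m) = Code^R(r₂)·Code^R(r₁)`,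
and `Code^R(r) = Code^L(r)·Θ` for every `r`, then
`Code^R(r₂) = Code^L(r₁)·Code^L(r₂)·Code^L(r₁)⁻¹`. -/
theorem codeR_conj (n : ℕ) (Θ : Equiv.Perm (Fin n)) (r₁ r₂ m : ℚ)
    (CL CR : ℚ → Equiv.Perm (Fin n))
    (h1 : CL m = CL r₁ * CL r₂)
    (h2 : CR m = CR r₂ * CR r₁)
    (h3 : ∀ r : ℚ, CR r = CL r * Θ) :
    CR r₂ = CL r₁ * CL r₂ * (CL r₁)⁻¹ := by
  have key := h2
  rw [h3 m, h3 r₂, h3 r₁, h1] at key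
  -- key : CL r₁ * CL r₂ * Θ = CL r₂ * Θ * (CL r₁ * Θ)
  have h4 : CL r₁ * CL r₂ = CL r₂ * Θ * CL r₁ :=
    mul_right_cancel (b := Θ) (by rw [mul_assoc]; exact key)
  rw [h3 r₂, eq_comm, mul_inv_eq_iff_eq_mul, h4, mul_assoc]
end

section
/- Let α, β ∈ S_n, let s be the order of α, and fix m ∈ {1,…,n}. Consider Ω_m = {i ∈ ℕ, i ≥ 1 : (α β^i)(m) = m}. If Ω_m is nonempty, then Ω_m is an arithmetic progression: there exist u ≥ 1 and v ≥ 1 with v ≤ n such that Ω_m = {u + v·t : t ≥ 0}, where v divides the order of β. -/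
/-- For `α, β ∈ S_n`, `s = ord(α)` and a point `m`, the set
`Ω_m = {i ≥ 1 : (α β^i)(m) = m}`, if nonempty, is an arithmetic progression
`{u + v·t : t ≥ 0}` with `u, v ≥ 1`, `v ≤ n` and `v` dividing the order of `β`. -/
theorem scc_parameters_arithmetic_progression (n : ℕ) (α β : Equiv.Perm (Fin n))
    (s : ℕ) (hs : s = orderOf α) (m : Fin n)
    (hne : {i : ℕ | 1 ≤ i ∧ (α * β ^ i) m = m}.Nonempty) :
    ∃ u v : ℕ, 1 ≤ u ∧ 1 ≤ v ∧ v ≤ n ∧ v ∣ orderOf β ∧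
      {i : ℕ | 1 ≤ i ∧ (α * β ^ i) m = m} = {j : ℕ | ∃ t : ℕ, j = u + v * t} := by
  classical
  set Ω : Set ℕ := {i : ℕ | 1 ≤ i ∧ (α * β ^ i) m = m} with hΩ
  set u : ℕ := sInf Ω with hu
  have huΩ : u ∈ Ω := Nat.sInf_mem hne
  set v : ℕ := Function.minimalPeriod (⇑β) m with hv
  -- m is a periodic point of β
  have hper : Function.IsPeriodicPt (⇑β) (orderOf β) m := by
    unfold Function.IsPeriodicPt Function.IsFixedPt
    rw [← Equiv.Perm.coe_pow, pow_orderOf_eq_one]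
    rfl
  have hβpos : 0 < orderOf β := orderOf_pos β
  have hvdvd : v ∣ orderOf β := hper.minimalPeriod_dvd
  have hvpos : 0 < v :=
    Function.IsPeriodicPt.minimalPeriod_pos hβpos hper
  -- v ≤ n : the points β^[i] m, i < v, are distinct elements of Fin n
  have hvle : v ≤ n := by
    have hinj : Set.InjOn (fun i => (⇑β)^[i] m) (Set.Iio v) :=
      Function.iterate_injOn_Iio_minimalPeriod
    have : v = (Finset.range v).card := (Finset.card_range v).symm
    rw [this, ← Fintype.card_fin n]
    apply Finset.card_le_card_of_injOn (fun i => (⇑β)^[i] m)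
      (fun _ _ => Finset.mem_univ _)
    intro a ha b hb hab
    exact hinj (Set.mem_Iio.mpr (Finset.mem_range.mp ha))
      (Set.mem_Iio.mpr (Finset.mem_range.mp hb)) hab
  refine ⟨u, v, huΩ.1, hvpos, hvle, hvdvd, ?_⟩
  have key : ∀ k : ℕ, v ∣ k → (β ^ k) m = m := by
    intro k hk
    have : Function.IsPeriodicPt (⇑β) k m :=
      Function.isPeriodicPt_iff_minimalPeriod_dvd.mpr hk
    have h := this
    simp only [Function.IsPeriodicPt, Function.IsFixedPt, ← Equiv.Perm.coe_pow] at h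
    exact h
  ext i
  constructor
  · rintro ⟨hi1, hi2⟩
    have hiu : u ≤ i := Nat.sInf_le ⟨hi1, hi2⟩
    -- β^i m = β^u m
    have heq : (β ^ i) m = (β ^ u) m := α.injective (by
      rw [← Equiv.Perm.mul_apply, ← Equiv.Perm.mul_apply, hi2, huΩ.2])
    -- hence β^(i-u) m = m
    have h3 : (β ^ u) ((β ^ (i - u)) m) = (β ^ u) m := by
      rw [← Equiv.Perm.mul_apply, ← pow_add, Nat.add_sub_cancel' hiu, heq]
    have h4 : (β ^ (i - u)) m = m := (β ^ u).injective h3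
    have h5 : Function.IsPeriodicPt (⇑β) (i - u) m := by
      rw [Function.IsPeriodicPt, Function.IsFixedPt, ← Equiv.Perm.coe_pow]
      exact h4
    obtain ⟨t, ht⟩ := h5.minimalPeriod_dvd
    exact ⟨t, by rw [hv]; omega⟩
  · rintro ⟨t, rfl⟩
    refine ⟨le_trans huΩ.1 (Nat.le_add_right _ _), ?_⟩
    have : (β ^ (u + v * t)) m = (β ^ u) m := by
      rw [pow_add, Equiv.Perm.mul_apply, key (v * t) ⟨t, rfl⟩]
    rw [Equiv.Perm.mul_apply, this, ← Equiv.Perm.mul_apply, huΩ.2]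
end
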